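/- Considering ℝ^ℕ (the space of all real sequences) and ℝ as vector spaces over the field ℚ of rational numbers, there exists a ℚ-linear bijection f : ℝ^ℕ → ℝ. Consequently, there exists a metric d on ℝ such that (ℝ, +, d), where + is the usual addition of real numbers, is an abelian Polish group which is not locally compact, being topologically isomorphic as a topological group to (ℝ^ℕ, +) equipped with the product (Tychonoff) topology; in particular, the usual addition of ℝ admits a group topology which is Polish and not locally compact. -/

import Mathlib

/-!
Both `ℝ^ℕ` and `ℝ` are `ℚ`-vector spaces of dimension `𝔠`, hence `ℚ`-linearly isomorphic.
Pulling the product topology of `ℝ^ℕ` back to `ℝ` along such an isomorphism gives a Polish group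
topology on `(ℝ, +)`. It is not locally compact because `ℝ^ℕ` is not, and it is isomorphic to its
own countable power because `ℕ ≃ ℕ × ℕ`.
-/

open Topology TopologicalSpace

theorem Cardinal.mk_nat_arrow_real : Cardinal.mk (ℕ → ℝ) = Cardinal.continuum := by
  simp [Cardinal.mk_real, Cardinal.continuum_power_aleph0]

theorem rank_rat_nat_arrow_real : Module.rank ℚ (ℕ → ℝ) = Cardinal.continuum := by
  refine (Module.Free.rank_eq_mk_of_infinite_lt ℚ _ ?_).trans Cardinal.mk_nat_arrow_real
  rw [Cardinal.lift_id, Cardinal.lift_id, Cardinal.mk_nat_arrow_real, Cardinal.mk_denumerable]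
  exact Cardinal.aleph0_lt_continuum

theorem nonempty_rat_linearEquiv_nat_arrow_real : Nonempty ((ℕ → ℝ) ≃ₗ[ℚ] ℝ) :=
  nonempty_linearEquiv_of_rank_eq (rank_rat_nat_arrow_real.trans Real.rank_rat_real.symm)

theorem not_isCompact_of_mem_nhds_pi {ι : Type*} {X : ι → Type*} [∀ i, TopologicalSpace (X i)]
    [Infinite ι] [∀ i, NoncompactSpace (X i)] {x : ∀ i, X i} {K : Set (∀ i, X i)}
    (hK : K ∈ 𝓝 x) : ¬IsCompact K := by
  classical
  rw [nhds_pi, Filter.mem_pi] at hK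
  obtain ⟨I, hI, t, ht, htK⟩ := hK
  -- `K` contains a cylinder over the finite set `I`; outside `I` it projects onto a whole factor.
  obtain ⟨n, hn⟩ := hI.infinite_compl.nonempty
  have hsurj : Function.eval n '' K = Set.univ := by
    refine Set.eq_univ_of_forall fun r =>
      ⟨Function.update x n r, htK fun j hj => ?_, Function.update_self ..⟩
    rw [Function.update_of_ne (ne_of_mem_of_not_mem hj hn)]
    exact mem_of_mem_nhds (ht j)
  exact fun hc => noncompact_univ (X n) (hsurj ▸ hc.image (continuous_apply n))

namespace ContinuousAddEquiv

variable {G ι κ : Type*} [TopologicalSpace G] [Add G]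

def piCongrRight {A B : ι → Type*} [∀ i, TopologicalSpace (A i)] [∀ i, TopologicalSpace (B i)]
    [∀ i, Add (A i)] [∀ i, Add (B i)] (e : ∀ i, A i ≃ₜ+ B i) : (∀ i, A i) ≃ₜ+ (∀ i, B i) :=
  .mk' (.piCongrRight fun i => (e i).toHomeomorph) fun x y =>
    funext fun i => map_add (e i) (x i) (y i)

def arrowCongrLeft (e : ι ≃ κ) : (ι → G) ≃ₜ+ (κ → G) :=
  .mk' (Homeomorph.piCongrLeft (Y := fun _ => G) e.symm).symm fun _ _ => rfl

def piCurry : (ι × κ → G) ≃ₜ+ (ι → κ → G) :=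
  .mk' Homeomorph.piCurry fun _ _ => rfl

def natArrowCurry : (ℕ → G) ≃ₜ+ (ℕ → ℕ → G) :=
  (arrowCongrLeft Nat.pairEquiv.symm).trans piCurry

def natArrowSelf {A : Type*} [TopologicalSpace A] [Add A] (φ : G ≃ₜ+ (ℕ → A)) :
    G ≃ₜ+ (ℕ → G) :=
  φ.trans (natArrowCurry.trans (piCongrRight fun _ => φ.symm))

end ContinuousAddEquiv

theorem AddEquiv.exists_metricSpace_of_equiv_natArrow {G A : Type*} [AddGroup G] [AddGroup A]
    [TopologicalSpace A] [PolishSpace A] [IsTopologicalAddGroup A] [NoncompactSpace A]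
    (e : G ≃+ (ℕ → A)) :
    ∃ _ : MetricSpace G, CompleteSpace G ∧ SeparableSpace G ∧
      Continuous (fun p : G × G => -p.1 + p.2) ∧ (∃ x : G, ∀ K ∈ 𝓝 x, ¬IsCompact K) ∧
      ∃ ψ : G ≃+ (ℕ → G), Continuous ψ ∧ Continuous ψ.symm := by
  let _ : TopologicalSpace G := e.toEquiv.topologicalSpace
  let φ : G ≃ₜ+ (ℕ → A) := .mk' e.toEquiv.homeomorph (map_add e)
  have : PolishSpace G := φ.toHomeomorph.isClosedEmbedding.polishSpace
  have : IsTopologicalAddGroup G := φ.isTopologicalAddGroup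
  let ψ := φ.natArrowSelf
  refine ⟨completelyMetrizableMetric G, complete_completelyMetrizableMetric G, inferInstance,
    continuous_fst.neg.add continuous_snd, ⟨0, fun K hK hc => ?_⟩,
    ψ, ψ.continuous, ψ.symm.continuous⟩
  exact not_isCompact_of_mem_nhds_pi (φ.isOpenMap.image_mem_nhds hK) (hc.image φ.continuous)

/-- Example 2.10: there is a ℚ-linear bijection `f : ℝ^ℕ → ℝ`, and
consequently a metric `d` on `ℝ` making `(ℝ, +, d)` (with the usual addition) an
abelian non-locally compact Polish group topologically isomorphic to `(ℝ^ℕ, +)`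
with the product (Tychonoff) topology. -/
theorem real_usual_addition_non_locally_compact_polish :
    (∃ f : (ℕ → ℝ) ≃+ ℝ,
      ∀ (q : ℚ) (x : ℕ → ℝ), f (q • x) = (q : ℝ) • f x) ∧
    ∃ m : MetricSpace ℝ,
      let t : TopologicalSpace ℝ := m.toUniformSpace.toTopologicalSpace
      @CompleteSpace ℝ m.toUniformSpace ∧
      @TopologicalSpace.SeparableSpace ℝ t ∧
      @Continuous (ℝ × ℝ) ℝ (@instTopologicalSpaceProd ℝ ℝ t t) t
        (fun p => -p.1 + p.2) ∧
      (∃ x : ℝ, ∀ K ∈ @nhds ℝ t x, ¬@IsCompact ℝ t K) ∧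
      ∃ e : ℝ ≃+ (ℕ → ℝ),
        @Continuous ℝ (ℕ → ℝ) t inferInstance e ∧
        @Continuous (ℕ → ℝ) ℝ inferInstance t e.symm := by
  obtain ⟨f⟩ := nonempty_rat_linearEquiv_nat_arrow_real
  exact ⟨⟨f.toAddEquiv, fun q x => by simp [Rat.smul_def]⟩,
    f.symm.toAddEquiv.exists_metricSpace_of_equiv_natArrow⟩
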